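/- arXiv:1505.00678 — 2 statements merged into one kernel-verified Lean document; each statement's English description precedes it below -/
import Mathlib

section
/- Let $X : [0,T] \to [0,\infty)$ be absolutely continuous satisfying $X'(t) + a\,X(t)^{\alpha} \le b + c\,\sup_{0 \le s \le t} X(s)^{\alpha_0}$ for a.e. $t \in [0,T]$, with $b, c \ge 0$, $a > 0$, $\alpha > \alpha_0 \ge 0$. Then $\sup_{t \in [0,T]} X(t) \le \max\{X(0), C\}$ for a constant $C$ depending on $a, b, c, \alpha, \alpha_0$ but independent of $T$. -/
open MeasureTheory Set

theorem stmt_2 (a b c α α₀ : ℝ)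
    (hb : 0 ≤ b) (hc : 0 ≤ c) (ha : 0 < a)
    (hα : α₀ < α) (hα₀ : 0 ≤ α₀) :
    ∃ C > 0, ∀ (T : ℝ) (X X' : ℝ → ℝ), 0 < T →
      (∀ t ∈ Icc (0:ℝ) T, 0 ≤ X t) →
      ContinuousOn X (Icc 0 T) →
      (∀ t ∈ Icc (0:ℝ) T, X t = X 0 + ∫ s in (0:ℝ)..t, X' s) →
      (∀ᵐ t ∂(volume.restrict (Icc (0:ℝ) T)),
        X' t + a * X t ^ α
          ≤ b + c * sSup ((fun s => X s ^ α₀) '' Icc (0:ℝ) t)) →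
      ∀ t ∈ Icc (0:ℝ) T, X t ≤ max (X 0) C := by
  have hd : 0 < α - α₀ := by linarith
  set D : ℝ := ((b + c + 1) / a) ^ (α - α₀)⁻¹ with hDdef
  have hDnn : 0 ≤ D := Real.rpow_nonneg (by positivity) _
  -- key inequality
  have key : ∀ x : ℝ, max 1 D ≤ x → b + c * x ^ α₀ + 1 ≤ a * x ^ α := by
    intro x hx
    have hx1 : (1 : ℝ) ≤ x := le_trans (le_max_left _ _) hx
    have hx0 : 0 < x := lt_of_lt_of_le one_pos hx1
    have hDx : D ≤ x := le_trans (le_max_right _ _) hx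
    have h2 : (b + c + 1) / a ≤ x ^ (α - α₀) := by
      have : D ^ (α - α₀) = (b + c + 1) / a :=
        Real.rpow_inv_rpow (by positivity) hd.ne'
      rw [← this]
      exact Real.rpow_le_rpow hDnn hDx hd.le
    have h3 : x ^ α = x ^ α₀ * x ^ (α - α₀) := by
      rw [← Real.rpow_add hx0]; ring_nf
    have h4 : (1 : ℝ) ≤ x ^ α₀ := Real.one_le_rpow hx1 hα₀
    have h5 : b + c + 1 ≤ a * x ^ (α - α₀) := by
      calc b + c + 1 = a * ((b + c + 1) / a) := by field_simp
        _ ≤ a * x ^ (α - α₀) := by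
            exact mul_le_mul_of_nonneg_left h2 ha.le
    rw [h3]
    have hxα₀ : 0 ≤ x ^ α₀ := by positivity
    nlinarith [mul_le_mul_of_nonneg_left h5 hxα₀]
  refine ⟨max 1 D, lt_of_lt_of_le one_pos (le_max_left _ _), ?_⟩
  intro T X X' hT hX0 hXc hFTC hode t ht
  by_contra hcon
  push_neg at hcon
  set M : ℝ := max (X 0) (max 1 D) with hMdef
  -- maximizer of X on [0,T]
  obtain ⟨t₂, ht₂mem, ht₂max⟩ :=
    isCompact_Icc.exists_isMaxOn (α := ℝ) (f := X) ⟨0, by constructor <;> linarith⟩ hXc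
  set K : ℝ := X t₂ with hKdef
  have hMK : M < K := lt_of_lt_of_le hcon (ht₂max ht)
  have hCK : max 1 D ≤ K := le_trans (le_max_right _ _) hMK.le
  have hK1 : (1 : ℝ) ≤ K := le_trans (le_max_left _ _) hCK
  have hK0 : (0 : ℝ) < K := lt_of_lt_of_le one_pos hK1
  have hKkey : b + c * K ^ α₀ + 1 ≤ a * K ^ α := key K hCK
  -- find λ = l < K with M < l and b + c*K^α₀ < a * l^α
  have hcont : ContinuousAt (fun x : ℝ => a * x ^ α) K :=
    continuousAt_const.mul (Real.continuousAt_rpow_const K α (Or.inl hK0.ne'))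
  have hev1 : ∀ᶠ x in nhdsWithin K (Iio K), b + c * K ^ α₀ < a * x ^ α := by
    apply eventually_nhdsWithin_of_eventually_nhds
    have : b + c * K ^ α₀ < a * K ^ α := by linarith
    exact hcont (Ioi_mem_nhds this)
  have hev2 : ∀ᶠ x in nhdsWithin K (Iio K), M < x :=
    eventually_nhdsWithin_of_eventually_nhds (eventually_gt_nhds hMK)
  have hev3 : ∀ᶠ x in nhdsWithin K (Iio K), x < K :=
    eventually_mem_nhdsWithin.mono (fun x hx => hx)
  obtain ⟨l, hl1, hMl, hlK⟩ := (hev1.and (hev2.and hev3)).exists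
  have hl0 : (0 : ℝ) < l := lt_of_lt_of_le (lt_of_lt_of_le one_pos (le_trans (le_max_left _ _) (le_max_right (X 0) _))) hMl.le
  -- last time before t₂ that X ≤ l
  set S : Set ℝ := Icc 0 t₂ ∩ X ⁻¹' Iic l with hSdef
  have hSne : S.Nonempty := ⟨0, ⟨le_refl 0, ht₂mem.1⟩, by
    have : X 0 ≤ M := le_max_left _ _
    exact le_of_lt (lt_of_le_of_lt this hMl)⟩
  have hSbdd : BddAbove S := ⟨t₂, fun s hs => hs.1.2⟩
  have hSclosed : IsClosed S := by
    have : ContinuousOn X (Icc 0 t₂) :=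
      hXc.mono (Icc_subset_Icc le_rfl ht₂mem.2)
    exact this.preimage_isClosed_of_isClosed isClosed_Icc isClosed_Iic
  set t₁ : ℝ := sSup S with ht₁def
  have ht₁S : t₁ ∈ S := hSclosed.csSup_mem hSne hSbdd
  have ht₁l : X t₁ ≤ l := ht₁S.2
  have ht₁12 : t₁ < t₂ := by
    rcases lt_or_eq_of_le ht₁S.1.2 with h | h
    · exact h
    · exfalso; rw [h] at ht₁l; exact absurd ht₁l (not_le.mpr hlK)
  have ht₁0 : 0 ≤ t₁ := ht₁S.1.1
  have ht₂T : t₂ ≤ T := ht₂mem.2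
  have ht₁T : t₁ ∈ Icc (0:ℝ) T := ⟨ht₁0, le_trans ht₁12.le ht₂T⟩
  have hgt : ∀ s ∈ Ioc t₁ t₂, l < X s := by
    intro s hs
    by_contra hns
    push_neg at hns
    have : s ∈ S := ⟨⟨le_trans ht₁0 hs.1.le, hs.2⟩, hns⟩
    exact absurd (le_csSup hSbdd this) (not_le.mpr hs.1)
  -- integrability
  have hInt : IntervalIntegrable X' volume 0 t₂ := by
    by_contra hni
    have h0 : (∫ s in (0:ℝ)..t₂, X' s) = 0 := intervalIntegral.integral_undef hni
    have := hFTC t₂ ht₂mem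
    rw [h0, add_zero] at this
    have : K ≤ M := by rw [hKdef, this]; exact le_max_left _ _
    exact absurd this (not_le.mpr hMK)
  have hInt1 : IntervalIntegrable X' volume 0 t₁ := by
    apply hInt.mono_set
    rw [uIcc_of_le ht₁0, uIcc_of_le (le_trans ht₁0 ht₁12.le)]
    exact Icc_subset_Icc le_rfl ht₁12.le
  have hInt2 : IntervalIntegrable X' volume t₁ t₂ := by
    apply hInt.mono_set
    rw [uIcc_of_le ht₁12.le, uIcc_of_le (le_trans ht₁0 ht₁12.le)]
    exact Icc_subset_Icc ht₁0 le_rfl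
  have hdiff : X t₂ - X t₁ = ∫ s in t₁..t₂, X' s := by
    have h1 := hFTC t₁ ht₁T
    have h2 := hFTC t₂ ht₂mem
    have h3 := intervalIntegral.integral_add_adjacent_intervals hInt1 hInt2
    rw [h1, h2, ← h3]; ring
  -- a.e. nonpositivity of X' on Ioc t₁ t₂
  have hode' : ∀ᵐ s ∂(volume.restrict (Ioc t₁ t₂)),
      X' s + a * X s ^ α ≤ b + c * sSup ((fun u => X u ^ α₀) '' Icc (0:ℝ) s) :=
    ae_restrict_of_ae_restrict_of_subset
      (Ioc_subset_Icc_self.trans (Icc_subset_Icc ht₁0 ht₂T)) hode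
  have hae : ∀ᵐ s ∂(volume.restrict (Ioc t₁ t₂)), X' s ≤ 0 := by
    filter_upwards [hode', ae_restrict_mem measurableSet_Ioc] with s hs hsmem
    have hsIcc : s ∈ Icc (0:ℝ) T :=
      ⟨le_trans ht₁0 hsmem.1.le, le_trans hsmem.2 ht₂T⟩
    have hsup : sSup ((fun u => X u ^ α₀) '' Icc (0:ℝ) s) ≤ K ^ α₀ := by
      apply csSup_le
      · exact (nonempty_Icc.mpr hsIcc.1).image _
      · rintro _ ⟨u, hu, rfl⟩
        have huT : u ∈ Icc (0:ℝ) T := ⟨hu.1, le_trans hu.2 hsIcc.2⟩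
        exact Real.rpow_le_rpow (hX0 u huT) (ht₂max huT) hα₀
    have hXs : l ≤ X s := (hgt s hsmem).le
    have hpow : a * l ^ α ≤ a * X s ^ α :=
      mul_le_mul_of_nonneg_left (Real.rpow_le_rpow hl0.le hXs (by linarith)) ha.le
    have hcs : c * sSup ((fun u => X u ^ α₀) '' Icc (0:ℝ) s) ≤ c * K ^ α₀ :=
      mul_le_mul_of_nonneg_left hsup hc
    linarith [hl1]
  have hint_le : (∫ s in t₁..t₂, X' s) ≤ 0 := by
    rw [intervalIntegral.integral_of_le ht₁12.le]
    exact integral_nonpos_of_ae hae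
  have : X t₂ ≤ X t₁ := by linarith [hdiff ▸ hint_le]
  linarith [lt_of_le_of_lt ht₁l hlK]
end

section
/- Let $(W_k)_{k \ge 0}$ be a sequence of nonnegative reals satisfying $W_k \le C_0\, 2^{3k}\, W_{k-1}^{2} + C_1\, 2^{\mu k}\, W_{k-1}^{\nu}$ for all $k \ge 1$, where $C_0, C_1 > 0$, $\mu > 0$, and $\nu > 1$. Then there exist $a \in (0,1)$ and $\epsilon_0 > 0$ (depending only on $C_0, C_1, \mu, \nu$) such that if $W_0 \le \epsilon_0$, then $W_k \le W_0\, a^{k}$ for all $k$, and in particular $\lim_{k \to \infty} W_k = 0$. -/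
set_option maxHeartbeats 1000000

open Real

theorem stmt_6 (C0 C1 μ ν : ℝ) (hC0 : 0 < C0) (hC1 : 0 < C1) (hμ : 0 < μ) (hν : 1 < ν) :
    ∃ a ∈ Set.Ioo (0:ℝ) 1, ∃ ε₀ > 0, ∀ W : ℕ → ℝ,
      (∀ k, 0 ≤ W k) →
      (∀ k : ℕ, 1 ≤ k →
        W k ≤ C0 * 2^(3*k) * (W (k-1))^2 + C1 * (2:ℝ)^(μ * k) * (W (k-1))^ν) →
      W 0 ≤ ε₀ →
      (∀ k, W k ≤ W 0 * a^k) ∧ Filter.Tendsto W Filter.atTop (nhds 0) := by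
  have hν1 : (0:ℝ) < ν - 1 := by linarith
  set a : ℝ := (1/2) * min ((2:ℝ)^(-(3:ℝ))) ((2:ℝ)^(-(μ/(ν-1)))) with ha_def
  have hmin_pos : 0 < min ((2:ℝ)^(-(3:ℝ))) ((2:ℝ)^(-(μ/(ν-1)))) :=
    lt_min (rpow_pos_of_pos two_pos _) (rpow_pos_of_pos two_pos _)
  have ha0 : 0 < a := by
    rw [ha_def]; exact mul_pos (by norm_num) hmin_pos
  have h3 : (2:ℝ)^(-(3:ℝ)) = 1/8 := by
    rw [show (-(3:ℝ)) = ((-3:ℤ):ℝ) by norm_num, rpow_intCast]; norm_num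
  have ha18 : a ≤ 1/16 := by
    have h := min_le_left ((2:ℝ)^(-(3:ℝ))) ((2:ℝ)^(-(μ/(ν-1))))
    rw [h3] at h
    rw [ha_def]; linarith
  have ha1 : a < 1 := by linarith
  have h8a : 8 * a ≤ 1/2 := by linarith
  have haμ : a ≤ (2:ℝ)^(-(μ/(ν-1))) := by
    have h := min_le_right ((2:ℝ)^(-(3:ℝ))) ((2:ℝ)^(-(μ/(ν-1))))
    rw [ha_def]; nlinarith [hmin_pos]
  have hμa : (2:ℝ)^μ * a^(ν-1) ≤ 1 := by
    have h1 : a^(ν-1) ≤ ((2:ℝ)^(-(μ/(ν-1))))^(ν-1) :=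
      rpow_le_rpow ha0.le haμ hν1.le
    have h2 : ((2:ℝ)^(-(μ/(ν-1))))^(ν-1) = (2:ℝ)^(-μ) := by
      rw [← rpow_mul (by norm_num : (0:ℝ) ≤ 2)]
      congr 1
      field_simp
    have h4 : (2:ℝ)^μ * (2:ℝ)^(-μ) = 1 := by
      rw [← rpow_add two_pos]; simp
    have h5 : (0:ℝ) < (2:ℝ)^μ := rpow_pos_of_pos two_pos _
    nlinarith [h1, h2 ▸ h1]
  -- ε₀
  set ε₀ : ℝ := min (a/(16*C0)) ((a/((2:ℝ)^(μ+1)*C1))^((ν-1)⁻¹)) with hε_def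
  have h2μ1 : (0:ℝ) < (2:ℝ)^(μ+1) := rpow_pos_of_pos two_pos _
  have hε0 : 0 < ε₀ := by
    apply lt_min
    · positivity
    · apply rpow_pos_of_pos; positivity
  refine ⟨a, ⟨ha0, ha1⟩, ε₀, hε0, ?_⟩
  intro W hWnn hrec hWε
  have hεν : ε₀^(ν-1) ≤ a/((2:ℝ)^(μ+1)*C1) := by
    have h1 : ε₀^(ν-1) ≤ ((a/((2:ℝ)^(μ+1)*C1))^((ν-1)⁻¹))^(ν-1) :=
      rpow_le_rpow hε0.le (min_le_right _ _) hν1.le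
    have h2 : ((a/((2:ℝ)^(μ+1)*C1))^((ν-1)⁻¹))^(ν-1) = a/((2:ℝ)^(μ+1)*C1) := by
      rw [← rpow_mul (by positivity), inv_mul_cancel₀ hν1.ne', rpow_one]
    linarith [h2 ▸ h1]
  -- main induction
  have main : ∀ k, W k ≤ W 0 * a^k := by
    intro k
    induction k with
    | zero => simp
    | succ m ih =>
      have hWm : 0 ≤ W m := hWnn m
      have hstep := hrec (m+1) (by omega)
      simp only [Nat.add_sub_cancel] at hstep
      push_cast at hstep
      have hWa : 0 ≤ W 0 * a^m := mul_nonneg (hWnn 0) (pow_nonneg ha0.le m)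
      -- monotone bound
      have hb1 : (W m)^2 ≤ (W 0 * a^m)^2 := by
        apply pow_le_pow_left₀ hWm ih
      have hb2 : (W m)^ν ≤ (W 0 * a^m)^ν := rpow_le_rpow hWm ih (by linarith)
      have h2μpos : (0:ℝ) < (2:ℝ)^μ := rpow_pos_of_pos two_pos _
      -- Part A
      have h8a2 : 8*a^2 ≤ a := by nlinarith
      have hA : C0 * 2^(3*(m+1)) * (W 0 * a^m)^2 ≤ 1/2 * (W 0 * a^(m+1)) := by
        have e1 : (C0:ℝ) * 2^(3*(m+1)) * (W 0 * a^m)^2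
            = (C0 * 8 * ((8*a^2)^m)) * W 0 * W 0 := by
          rw [pow_mul]
          have : ((8:ℝ)*a^2)^m = 8^m * (a^m)^2 := by
            rw [mul_pow, ← pow_mul, ← pow_mul, Nat.mul_comm]
          rw [this]; norm_num; ring
        rw [e1]
        have hbd : C0 * 8 * ((8*a^2)^m) * W 0 ≤ 1/2 * a^(m+1) := by
          have h1 : ((8:ℝ)*a^2)^m ≤ a^m := pow_le_pow_left₀ (by positivity) h8a2 m
          have h2 : W 0 ≤ a/(16*C0) := le_trans hWε (min_le_left _ _)
          calc C0 * 8 * ((8*a^2)^m) * W 0 ≤ C0 * 8 * a^m * (a/(16*C0)) := by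
                apply mul_le_mul (by gcongr <;> positivity) h2 (hWnn 0) (by positivity)
            _ = 1/2 * a^(m+1) := by
                rw [pow_succ]; field_simp; ring
        calc (C0 * 8 * ((8*a^2)^m)) * W 0 * W 0 ≤ (1/2 * a^(m+1)) * W 0 :=
              mul_le_mul_of_nonneg_right hbd (hWnn 0)
          _ = 1/2 * (W 0 * a^(m+1)) := by ring
      -- Part B
      have hB : C1 * (2:ℝ)^(μ*(m+1)) * (W 0 * a^m)^ν ≤ 1/2 * (W 0 * a^(m+1)) := by
        rcases eq_or_lt_of_le (hWnn 0) with h0 | hW0pos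
        · rw [← h0]
          rw [show ((0:ℝ) * a^m) = 0 by ring, zero_rpow (ne_of_gt (by linarith : (0:ℝ) < ν))]
          simp
        · have haν : a^ν = a^(ν-1) * a := by
            rw [show ν = (ν-1)+1 by ring]
            rw [rpow_add ha0, rpow_one]
            ring_nf
          have h2aν : (2:ℝ)^μ * a^ν ≤ a := by
            rw [haν]
            calc (2:ℝ)^μ * (a^(ν-1) * a) = ((2:ℝ)^μ * a^(ν-1)) * a := by ring
              _ ≤ 1 * a := mul_le_mul_of_nonneg_right hμa ha0.le
              _ = a := one_mul a
          have eB : C1 * (2:ℝ)^(μ*(m+1)) * (W 0 * a^m)^ν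
              = (C1 * (2:ℝ)^μ * ((2:ℝ)^μ * a^ν)^m * (W 0)^(ν-1)) * W 0 := by
            have e1 : (2:ℝ)^(μ*(m+1):ℝ) = (2:ℝ)^μ * ((2:ℝ)^μ)^m := by
              rw [show (μ*(m+1):ℝ) = μ + μ*m by push_cast; ring, rpow_add two_pos]
              congr 1
              rw [← rpow_natCast ((2:ℝ)^μ) m, ← rpow_mul (by norm_num : (0:ℝ) ≤ 2)]
            have e2 : (W 0 * a^m)^ν = (W 0)^(ν-1) * W 0 * (a^ν)^m := by
              rw [mul_rpow (hWnn 0) (by positivity)]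
              congr 1
              · rw [show ν = (ν-1)+1 by ring, rpow_add hW0pos, rpow_one]; ring_nf
              · rw [← rpow_natCast a m, ← rpow_mul ha0.le, ← rpow_natCast (a^ν) m,
                  ← rpow_mul ha0.le]
                congr 1; ring
            rw [e2]
            push_cast at e1
            rw [e1, mul_pow]
            ring
          rw [eB]
          have hbd : C1 * (2:ℝ)^μ * ((2:ℝ)^μ * a^ν)^m * (W 0)^(ν-1) ≤ 1/2 * a^(m+1) := by
            have h1 : ((2:ℝ)^μ * a^ν)^m ≤ a^m :=
              pow_le_pow_left₀ (by positivity) h2aν m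
            have h2 : (W 0)^(ν-1) ≤ a/((2:ℝ)^(μ+1)*C1) :=
              le_trans (rpow_le_rpow (hWnn 0) hWε hν1.le) hεν
            have h3 : (2:ℝ)^(μ+1) = (2:ℝ)^μ * 2 := by
              rw [rpow_add two_pos, rpow_one]
            calc C1 * (2:ℝ)^μ * ((2:ℝ)^μ * a^ν)^m * (W 0)^(ν-1)
                ≤ C1 * (2:ℝ)^μ * a^m * (a/((2:ℝ)^(μ+1)*C1)) := by
                  apply mul_le_mul (by gcongr <;> positivity) h2
                    (rpow_nonneg (hWnn 0) _) (by positivity)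
              _ = 1/2 * a^(m+1) := by
                  rw [pow_succ, h3]; field_simp
          calc (C1 * (2:ℝ)^μ * ((2:ℝ)^μ * a^ν)^m * (W 0)^(ν-1)) * W 0
              ≤ (1/2 * a^(m+1)) * W 0 := mul_le_mul_of_nonneg_right hbd (hWnn 0)
            _ = 1/2 * (W 0 * a^(m+1)) := by ring
      calc W (m+1) ≤ C0 * 2^(3*(m+1)) * (W m)^2 + C1 * (2:ℝ)^(μ*(m+1)) * (W m)^ν := hstep
        _ ≤ C0 * 2^(3*(m+1)) * (W 0 * a^m)^2 + C1 * (2:ℝ)^(μ*(m+1)) * (W 0 * a^m)^ν :=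
            add_le_add
              (mul_le_mul_of_nonneg_left hb1 (by positivity))
              (mul_le_mul_of_nonneg_left hb2
                (mul_nonneg hC1.le (rpow_pos_of_pos two_pos _).le))
        _ ≤ 1/2 * (W 0 * a^(m+1)) + 1/2 * (W 0 * a^(m+1)) := add_le_add hA hB
        _ = W 0 * a^(m+1) := by ring
  refine ⟨main, ?_⟩
  have hlim : Filter.Tendsto (fun k => W 0 * a^k) Filter.atTop (nhds 0) := by
    have := tendsto_pow_atTop_nhds_zero_of_lt_one ha0.le ha1
    simpa using this.const_mul (W 0)
  exact squeeze_zero hWnn main hlim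
end
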